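/- Let M ≥ 2 and n₁,…,n_M ≥ 2 be integers, S = ∏_{j=1}^M {1,…,n_j}, Q = ∏_{i=1}^M n_i − ∑_{i=1}^M n_i + M − 1, and let Cor be the S×S matrix whose (z,z′) entry is c_{I(z,z′)}, where I(z,z′) = {j : z_j = z′_j} is the agreement set, c_I = (M − 1 − ∑_{i∈I} n_i)/Q for I ⊊ {1,…,M}, and c_{{1,…,M}} = 1. Then Cor is symmetric and positive semidefinite, and its set of eigenvalues is exactly {0, (∏_{i=1}^M n_i)/Q}; in particular both values occur as eigenvalues, with the nonzero eigenvalue having multiplicity Q and the zero eigenvalue having multiplicity ∑_{i=1}^M n_i − M + 1. -/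

import Mathlib

/-!
With `P = ∏ nᵢ`, the entries of `Cor` say that `Q • Cor = P • (1 - Π)`, where `Π` is the
orthogonal projection, for the uniform measure on strata, onto the functions that are sums of
functions of a single coordinate. Writing `Π_T` for averaging over the coordinates outside `T`,
`Π = Π_∅ + ∑ᵢ (Π_{i} - Π_∅)`; independence of the coordinates gives `Π_S Π_T = Π_{S ∩ T}`, so
the summands are orthogonal idempotents and `1 - Π` is a symmetric idempotent with trace
`P - (∑ nᵢ - M + 1) = Q`. A positive multiple `λ • E` of a symmetric idempotent `E` is positive
semidefinite, its only eigenvalues are `0` and `λ`, and their eigenspaces are the range and the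
kernel of `E`, of dimensions `trace E` and `trace (1 - E)`.
-/

open Finset Module

theorem isIdempotentElem_add_sum_sub {R ι : Type*} [Ring R] [Fintype ι] [DecidableEq ι]
    (p : Finset ι → R) (hp : ∀ S T, p S * p T = p (S ∩ T)) :
    IsIdempotentElem (p ∅ + ∑ i, (p {i} - p ∅)) := by
  have hd : OrthogonalIdempotents fun i => p {i} - p ∅ :=
    ⟨fun i => by simp [IsIdempotentElem, sub_mul, mul_sub, hp],
      fun i j hij => by simp [sub_mul, mul_sub, hp, hij]⟩
  have h := hd.option (p ∅) (by simp [IsIdempotentElem, hp])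
    (by rw [mul_sum]; exact sum_eq_zero fun i _ => by simp [mul_sub, hp])
    (by rw [sum_mul]; exact sum_eq_zero fun i _ => by simp [sub_mul, hp])
  simpa [Fintype.sum_option] using h.isIdempotentElem_sum (s := univ)

namespace Matrix

section PiKronecker

variable {ι R : Type*} [Fintype ι] [CommSemiring R] {α β γ : ι → Type*}

def piKronecker (A : ∀ i, Matrix (α i) (β i) R) : Matrix (∀ i, α i) (∀ i, β i) R :=
  of fun z z' => ∏ i, A i (z i) (z' i)

@[simp]
theorem piKronecker_apply (A : ∀ i, Matrix (α i) (β i) R) (z : ∀ i, α i) (z' : ∀ i, β i) :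
    piKronecker A z z' = ∏ i, A i (z i) (z' i) :=
  rfl

theorem piKronecker_mul [DecidableEq ι] [∀ i, Fintype (β i)] (A : ∀ i, Matrix (α i) (β i) R)
    (B : ∀ i, Matrix (β i) (γ i) R) :
    piKronecker A * piKronecker B = piKronecker fun i => A i * B i := by
  ext z z''
  simp only [mul_apply, piKronecker_apply, ← prod_mul_distrib]
  exact (Fintype.prod_sum fun i x => A i (z i) x * B i x (z'' i)).symm

theorem transpose_piKronecker (A : ∀ i, Matrix (α i) (β i) R) :
    (piKronecker A)ᵀ = piKronecker fun i => (A i)ᵀ :=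
  rfl

theorem trace_piKronecker [DecidableEq ι] [∀ i, Fintype (α i)]
    (A : ∀ i, Matrix (α i) (α i) R) :
    (piKronecker A).trace = ∏ i, (A i).trace :=
  (Fintype.prod_sum fun i x => A i x x).symm

end PiKronecker

section Averaging

variable (α K : Type*) [Fintype α] [Field K]

def uniformAvg : Matrix α α K :=
  of fun _ _ => (Fintype.card α : K)⁻¹

variable {α K}

theorem isSymm_uniformAvg : (uniformAvg α K).IsSymm :=
  rfl

variable [Nonempty α] [CharZero K]

theorem isIdempotentElem_uniformAvg : IsIdempotentElem (uniformAvg α K) := by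
  ext a b
  simp [uniformAvg, mul_apply]

theorem trace_uniformAvg : (uniformAvg α K).trace = 1 := by
  simp [uniformAvg, trace]

end Averaging

section MarginalProj

variable {ι : Type*} [Fintype ι] [DecidableEq ι] (α : ι → Type*) [∀ i, Fintype (α i)]
  [∀ i, DecidableEq (α i)] (K : Type*) [Field K]

def marginalProj (T : Finset ι) : Matrix (∀ i, α i) (∀ i, α i) K :=
  piKronecker fun i => if i ∈ T then 1 else uniformAvg (α i) K

variable {α K}

theorem isSymm_marginalProj (T : Finset ι) : (marginalProj α K T).IsSymm := by
  rw [IsSymm, marginalProj, transpose_piKronecker]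
  congr! 2 with i
  split_ifs <;> simp [isSymm_uniformAvg.eq]

theorem marginalProj_empty_apply (z z' : ∀ i, α i) :
    marginalProj α K ∅ z z' = (∏ i, (Fintype.card (α i) : K))⁻¹ := by
  simp [marginalProj, uniformAvg, prod_inv_distrib]

variable [∀ i, Nonempty (α i)] [CharZero K]

theorem marginalProj_mul_marginalProj (S T : Finset ι) :
    marginalProj α K S * marginalProj α K T = marginalProj α K (S ∩ T) := by
  rw [marginalProj, marginalProj, piKronecker_mul, marginalProj]
  congr! 2 with i
  by_cases hS : i ∈ S <;> by_cases hT : i ∈ T <;>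
    simp [hS, hT, (isIdempotentElem_uniformAvg (α := α i) (K := K)).eq]

theorem trace_marginalProj (T : Finset ι) :
    (marginalProj α K T).trace = ∏ i ∈ T, (Fintype.card (α i) : K) := by
  rw [marginalProj, trace_piKronecker, ← Fintype.prod_ite_mem T]
  refine prod_congr rfl fun i _ => ?_
  split_ifs <;> simp [trace_uniformAvg]

theorem marginalProj_singleton_apply (i : ι) (z z' : ∀ i, α i) :
    marginalProj α K {i} z z' =
      if z i = z' i then (Fintype.card (α i) : K) / ∏ j, (Fintype.card (α j) : K) else 0 := by
  have hcard : (Fintype.card (α i) : K) ≠ 0 := by simp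
  have hcompl : ∀ j ∈ ({i}ᶜ : Finset ι),
      (if j ∈ ({i} : Finset ι) then 1 else uniformAvg (α j) K) (z j) (z' j) =
        (Fintype.card (α j) : K)⁻¹ := fun j hj => by
    simp_all [uniformAvg]
  rw [marginalProj, piKronecker_apply, Fintype.prod_eq_mul_prod_compl i, prod_congr rfl hcompl,
    Fintype.prod_eq_mul_prod_compl i]
  simp [one_apply, prod_inv_distrib, div_mul_cancel_left₀ hcard]

end MarginalProj

section MainEffectsProj

variable {ι : Type*} [Fintype ι] [DecidableEq ι] (α : ι → Type*) [∀ i, Fintype (α i)]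
  [∀ i, DecidableEq (α i)] (K : Type*) [Field K]

def mainEffectsProj : Matrix (∀ i, α i) (∀ i, α i) K :=
  marginalProj α K ∅ + ∑ i, (marginalProj α K {i} - marginalProj α K ∅)

variable {α K}

theorem isSymm_mainEffectsProj : (mainEffectsProj α K).IsSymm := by
  simp only [IsSymm, mainEffectsProj, transpose_add, transpose_sum, transpose_sub,
    (isSymm_marginalProj _).eq]

variable [∀ i, Nonempty (α i)] [CharZero K]

theorem isIdempotentElem_mainEffectsProj : IsIdempotentElem (mainEffectsProj α K) :=
  isIdempotentElem_add_sum_sub _ marginalProj_mul_marginalProj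

theorem trace_mainEffectsProj :
    (mainEffectsProj α K).trace = ∑ i, (Fintype.card (α i) : K) - Fintype.card ι + 1 := by
  rw [mainEffectsProj, trace_add, trace_sum]
  simp only [trace_sub, trace_marginalProj, prod_empty, prod_singleton, sum_sub_distrib,
    sum_const, card_univ, nsmul_one]
  ring

theorem mainEffectsProj_apply (z z' : ∀ i, α i) :
    mainEffectsProj α K z z' =
      (∑ i ∈ univ.filter fun j => z j = z' j, (Fintype.card (α i) : K) - Fintype.card ι + 1) /
        ∏ i, (Fintype.card (α i) : K) := by
  rw [mainEffectsProj, add_apply, sum_apply]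
  simp only [sub_apply, marginalProj_empty_apply, marginalProj_singleton_apply]
  rw [sum_sub_distrib, ← sum_filter, ← sum_div, sum_const, card_univ, nsmul_eq_mul]
  ring

end MainEffectsProj

end Matrix

namespace Module.End

open LinearMap

variable {K V : Type*} [Field K] [AddCommGroup V] [Module K V] {f : End K V}

theorem eigenspace_smul_self_of_isIdempotentElem (hf : IsIdempotentElem f) {c : K} (hc : c ≠ 0) :
    eigenspace (c • f) c = LinearMap.range f := by
  ext v
  rw [mem_eigenspace_iff, hf.mem_range_iff, LinearMap.smul_apply, smul_right_inj hc]

theorem eigenspace_smul_eq_bot_of_isIdempotentElem (hf : IsIdempotentElem f) {c t : K}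
    (ht₀ : t ≠ 0) (htc : t ≠ c) : eigenspace (c • f) t = ⊥ := by
  refine (Submodule.eq_bot_iff _).2 fun v hv => ?_
  rw [mem_eigenspace_iff, LinearMap.smul_apply] at hv
  have hfv : f v = v := by
    have := congrArg f hv
    rw [map_smul, map_smul, ← Module.End.mul_apply, hf.eq, hv, smul_right_inj ht₀] at this
    exact this.symm
  rw [hfv] at hv
  have : (c - t) • v = 0 := by rw [sub_smul, hv, sub_self]
  exact (smul_eq_zero.1 this).resolve_left (sub_ne_zero.2 htc.symm)

end Module.End

namespace Matrix

open LinearMap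

variable {ι : Type*} [Fintype ι]

theorem IsHermitian.posSemidef_of_isIdempotentElem {R : Type*} [CommRing R] [PartialOrder R]
    [StarRing R] [StarOrderedRing R] {E : Matrix ι ι R} (hH : E.IsHermitian)
    (hE : IsIdempotentElem E) : E.PosSemidef := by
  simpa [hH.eq, hE.eq] using posSemidef_conjTranspose_mul_self E

theorem exists_mulVec_eq_smul_iff {K : Type*} [Field K] (A : Matrix ι ι K) (t : K) :
    (∃ v, v ≠ 0 ∧ A *ᵥ v = t • v) ↔ End.eigenspace A.mulVecLin t ≠ ⊥ := by
  simp [Submodule.ne_bot_iff, and_comm]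

variable [DecidableEq ι] {K : Type*} [Field K] {E : Matrix ι ι K}

theorem isIdempotentElem_toLin' (hE : IsIdempotentElem E) : IsIdempotentElem (toLin' E) := by
  rw [IsIdempotentElem, Module.End.mul_eq_comp, ← toLin'_mul, hE.eq]

theorem finrank_eigenspace_smul_self (hE : IsIdempotentElem E) {c : K} (hc : c ≠ 0) :
    (finrank K (End.eigenspace (c • E).mulVecLin c) : K) = E.trace := by
  rw [← toLin'_apply', map_smul,
    End.eigenspace_smul_self_of_isIdempotentElem (isIdempotentElem_toLin' hE) hc,
    ← (isIdempotentElem_toLin' hE).isProj_range.trace, trace_toLin'_eq]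

theorem finrank_eigenspace_smul_zero (hE : IsIdempotentElem E) {c : K} (hc : c ≠ 0) :
    (finrank K (End.eigenspace (c • E).mulVecLin 0) : K) = (1 - E).trace := by
  have hE' := isIdempotentElem_toLin' hE
  have hsub : toLin' (1 - E) = 1 - toLin' E := by rw [map_sub, toLin'_one]; rfl
  rw [← toLin'_apply', map_smul, End.eigenspace_zero, ker_smul _ _ hc, hE'.ker_eq_range_one_sub,
    ← hE'.one_sub.isProj_range.trace, ← hsub, trace_toLin'_eq]

theorem setOf_exists_smul_mulVec_eq_smul (hE : IsIdempotentElem E) {c : K} (hc : c ≠ 0)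
    (h₁ : E.trace ≠ 0) (h₀ : (1 - E).trace ≠ 0) :
    {t | ∃ v, v ≠ 0 ∧ (c • E) *ᵥ v = t • v} = {0, c} := by
  ext t
  simp only [Set.mem_ofPred_eq, exists_mulVec_eq_smul_iff, Set.mem_insert_iff,
    Set.mem_singleton_iff]
  refine ⟨fun ht => ?_, ?_⟩
  · by_contra! h
    rw [← toLin'_apply', map_smul] at ht
    exact ht (End.eigenspace_smul_eq_bot_of_isIdempotentElem (isIdempotentElem_toLin' hE) h.1 h.2)
  · rintro (rfl | rfl) hbot
    · exact h₀ (by rw [← finrank_eigenspace_smul_zero hE hc, hbot, finrank_bot, Nat.cast_zero])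
    · exact h₁ (by rw [← finrank_eigenspace_smul_self hE hc, hbot, finrank_bot, Nat.cast_zero])

end Matrix

open Matrix

theorem Finset.sum_le_prod_of_two_le {ι : Type*} {s : Finset ι} {f : ι → ℕ}
    (hf : ∀ i ∈ s, 2 ≤ f i) : ∑ i ∈ s, f i ≤ ∏ i ∈ s, f i := by
  classical
  induction s using Finset.induction_on with
  | empty => simp
  | insert a s ha ih =>
    rw [sum_insert ha, prod_insert ha]
    have ih := ih fun i hi => hf i (mem_insert_of_mem hi)
    rcases s.eq_empty_or_nonempty with rfl | ⟨b, hb⟩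
    · simp
    · have hprod : 2 ≤ ∏ i ∈ s, f i := (hf b (mem_insert_of_mem hb)).trans <|
        single_le_prod' (fun i hi => one_le_two.trans (hf i (mem_insert_of_mem hi))) hb
      calc f a + ∑ i ∈ s, f i ≤ f a + ∏ i ∈ s, f i := Nat.add_le_add_left ih _
        _ ≤ f a * ∏ i ∈ s, f i := add_le_mul (hf a (mem_insert_self a s)) hprod

theorem one_le_prod_sub_sum_add_sub_one {M : ℕ} (hM : 2 ≤ M) {n : Fin M → ℕ}
    (hn : ∀ j, 2 ≤ n j) : 1 ≤ (∏ i, (n i : ℝ)) - (∑ i, (n i : ℝ)) + M - 1 := by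
  have hsum : (∑ i, (n i : ℝ)) ≤ ∏ i, (n i : ℝ) := by
    exact_mod_cast sum_le_prod_of_two_le fun i _ => hn i
  have hM' : (2 : ℝ) ≤ M := by exact_mod_cast hM
  linarith

theorem eq_smul_one_sub_mainEffectsProj {M : ℕ} {n : Fin M → ℕ} [∀ j, NeZero (n j)]
    {Q : ℝ} (hQ0 : Q ≠ 0) (hQ : Q = (∏ i, (n i : ℝ)) - (∑ i, (n i : ℝ)) + M - 1)
    {c : Finset (Fin M) → ℝ}
    (hc : ∀ I : Finset (Fin M), I ≠ Finset.univ →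
      c I = ((M : ℝ) - 1 - ∑ i ∈ I, (n i : ℝ)) / Q)
    (hcuniv : c Finset.univ = 1) {Cor : Matrix (∀ j, Fin (n j)) (∀ j, Fin (n j)) ℝ}
    (hCor : ∀ z z' : ∀ j, Fin (n j), Cor z z' = c (Finset.univ.filter fun j => z j = z' j)) :
    Cor = ((∏ i, (n i : ℝ)) / Q) • (1 - mainEffectsProj (fun j => Fin (n j)) ℝ) := by
  ext z z'
  have hP : (∏ i, (n i : ℝ)) ≠ 0 :=
    prod_ne_zero_iff.2 fun i _ => Nat.cast_ne_zero.2 (NeZero.ne _)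
  rw [hCor, Matrix.smul_apply, Matrix.sub_apply, mainEffectsProj_apply, smul_eq_mul]
  simp only [Fintype.card_fin]
  by_cases h : z = z'
  · subst h
    rw [filter_true_of_mem fun j _ => rfl, hcuniv, one_apply_eq]
    field_simp
    linarith
  · have hI : (univ.filter fun j => z j = z' j) ≠ univ := by
      simpa [filter_eq_self, funext_iff] using h
    rw [hc _ hI, one_apply_ne h]
    field_simp
    ring

/-- **Theorem 2 + Lemma 1 of the paper for the equal-prevalence correlation
matrix (35).** The matrix `Cor` with entries `c_{I(z,z′)}` is symmetric and
positive semidefinite; its set of eigenvalues is exactly `{0, (∏ nᵢ)/Q}`,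
the nonzero eigenvalue having multiplicity `Q` and the zero eigenvalue having
multiplicity `∑ nᵢ − M + 1`. -/
theorem equal_prevalence_correlation_matrix_spectrum
    (M : ℕ) (hM : 2 ≤ M) (n : Fin M → ℕ) (hn : ∀ j, 2 ≤ n j)
    (Q : ℕ) (hQ : (Q : ℝ) = (∏ i, (n i : ℝ)) - (∑ i, (n i : ℝ)) + M - 1)
    (c : Finset (Fin M) → ℝ)
    (hc : ∀ I : Finset (Fin M), I ≠ Finset.univ →
      c I = ((M : ℝ) - 1 - ∑ i ∈ I, (n i : ℝ)) / (Q : ℝ))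
    (hcuniv : c Finset.univ = 1)
    (Cor : Matrix (∀ j, Fin (n j)) (∀ j, Fin (n j)) ℝ)
    (hCor : ∀ z z' : ∀ j, Fin (n j),
      Cor z z' = c (Finset.univ.filter fun j => z j = z' j)) :
    Cor.IsSymm ∧ Cor.PosSemidef ∧
    {t : ℝ | ∃ v : (∀ j, Fin (n j)) → ℝ, v ≠ 0 ∧ Cor.mulVec v = t • v}
      = {0, (∏ i, (n i : ℝ)) / (Q : ℝ)} ∧
    Module.finrank ℝ
      (Module.End.eigenspace Cor.mulVecLin ((∏ i, (n i : ℝ)) / (Q : ℝ))) = Q ∧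
    Module.finrank ℝ (Module.End.eigenspace Cor.mulVecLin 0)
      = (∑ i, n i) - M + 1 := by
  have : ∀ j, NeZero (n j) := fun j => ⟨by linarith [hn j]⟩
  have hQpos : (0 : ℝ) < Q := hQ ▸ one_pos.trans_le (one_le_prod_sub_sum_add_sub_one hM hn)
  have hM_le : M ≤ ∑ i, n i := by
    simpa using sum_le_sum fun i (_ : i ∈ univ) => one_le_two.trans (hn i)
  have hPQ : 0 < (∏ i, (n i : ℝ)) / Q :=
    div_pos (prod_pos fun i _ => Nat.cast_pos.2 (NeZero.pos _)) hQpos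
  set E := 1 - mainEffectsProj (fun j => Fin (n j)) ℝ
  have hE : IsIdempotentElem E := isIdempotentElem_mainEffectsProj.one_sub
  have hEsymm : E.IsSymm := isSymm_one.sub isSymm_mainEffectsProj
  have htrE : E.trace = Q := by
    simp only [E, trace_sub, trace_one, trace_mainEffectsProj, Fintype.card_pi, Fintype.card_fin,
      Nat.cast_prod, hQ]
    ring
  have htrE' : (1 - E).trace = ((∑ i, n i - M + 1 : ℕ) : ℝ) := by
    simp [E, trace_mainEffectsProj, Nat.cast_sub hM_le]
  rw [eq_smul_one_sub_mainEffectsProj hQpos.ne' hQ hc hcuniv hCor]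
  refine ⟨hEsymm.smul _, ?_, ?_, ?_, ?_⟩
  · exact ((isHermitian_iff_isSymm.2 hEsymm).posSemidef_of_isIdempotentElem hE).smul hPQ.le
  · refine setOf_exists_smul_mulVec_eq_smul hE hPQ.ne' ?_ ?_
    · exact htrE ▸ hQpos.ne'
    · exact htrE' ▸ Nat.cast_ne_zero.2 (Nat.succ_ne_zero _)
  · exact_mod_cast (finrank_eigenspace_smul_self hE hPQ.ne').trans htrE
  · exact_mod_cast (finrank_eigenspace_smul_zero hE hPQ.ne').trans htrE'
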